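/- The map sending an n×n alternating sign matrix (a_{i,j}) to the (n+1)×(n+1) matrix h with h_{i,j} = i + j − 2·Σ_{k≤i} Σ_{l≤j} a_{k,l} is a bijection from the set of n×n alternating sign matrices to the set of height functions of degree n, with inverse given by a_{i,j} = −(1/2)(h_{i−1,j−1} − h_{i−1,j} + h_{i,j} − h_{i,j−1}). -/

import Mathlib

/-- Partial sum `s_{i,j} = Σ_{k≤i} Σ_{l≤j} a_{k,l}` (indices from 1). -/
def asmSum (a : ℕ → ℕ → ℤ) (i j : ℕ) : ℤ :=
  ∑ k ∈ Finset.Icc 1 i, ∑ l ∈ Finset.Icc 1 j, a k l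

/-- `a` is an `n × n` alternating sign matrix (entries indexed by `1..n`). -/
def IsASM (n : ℕ) (a : ℕ → ℕ → ℤ) : Prop :=
  (∀ i j, 1 ≤ i → i ≤ n → 1 ≤ j → j ≤ n → a i j = -1 ∨ a i j = 0 ∨ a i j = 1) ∧
  (∀ i, 1 ≤ i → i ≤ n → ∑ j ∈ Finset.Icc 1 n, a i j = 1) ∧
  (∀ j, 1 ≤ j → j ≤ n → ∑ i ∈ Finset.Icc 1 n, a i j = 1) ∧
  (∀ i j, 1 ≤ i → i ≤ n → 1 ≤ j → j ≤ n →
    (∑ l ∈ Finset.Icc 1 j, a i l = 0 ∨ ∑ l ∈ Finset.Icc 1 j, a i l = 1)) ∧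
  (∀ i j, 1 ≤ i → i ≤ n → 1 ≤ j → j ≤ n →
    (∑ k ∈ Finset.Icc 1 i, a k j = 0 ∨ ∑ k ∈ Finset.Icc 1 i, a k j = 1))

/-- `h` is a height function of degree `n` (an `(n+1) × (n+1)` matrix, indices `0..n`). -/
def IsHeight (n : ℕ) (h : ℕ → ℕ → ℤ) : Prop :=
  (∀ i j, i < n → j ≤ n → |h (i + 1) j - h i j| = 1) ∧
  (∀ i j, i ≤ n → j < n → |h i (j + 1) - h i j| = 1) ∧
  (∀ i, i ≤ n → h i 0 = i ∧ h 0 i = i ∧ h (n - i) n = i ∧ h n (n - i) = i)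

/-- The map from ASMs to height functions. -/
def asmToHeight (a : ℕ → ℕ → ℤ) (i j : ℕ) : ℤ :=
  (i : ℤ) + j - 2 * asmSum a i j

/-- The map from height functions to ASMs. -/
def heightToAsm (h : ℕ → ℕ → ℤ) (i j : ℕ) : ℤ :=
  -(h (i - 1) (j - 1) - h (i - 1) j + h i j - h i (j - 1)) / 2

/-!
With `s` the corner-sum matrix of `a`, the relation `h i j = i + j - 2 * s i j` turns the row
(column) partial sums of `a` into `(1 - Δh) / 2` for the vertical (horizontal) differences `Δh`
of `h`, so partial sums in `{0, 1}` correspond to steps `±1`, and full row and column sums `1`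
correspond to the boundary values `n - i` on the far sides. The entries of `a` are the mixed second
differences of `s`, i.e. minus half those of `h`, which is the inverse formula; conversely, for a
height function these mixed differences are even, and summing them recovers `h`.
-/

open Finset

lemma asmSum_zero_left (a : ℕ → ℕ → ℤ) (j : ℕ) : asmSum a 0 j = 0 := by
  simp [asmSum]

lemma asmSum_zero_right (a : ℕ → ℕ → ℤ) (i : ℕ) : asmSum a i 0 = 0 := by
  simp [asmSum]

lemma asmSum_succ_left (a : ℕ → ℕ → ℤ) (i j : ℕ) :
    asmSum a (i + 1) j = asmSum a i j + ∑ l ∈ Icc 1 j, a (i + 1) l := by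
  rw [asmSum, asmSum, sum_Icc_succ_top (by omega)]

lemma asmSum_succ_right (a : ℕ → ℕ → ℤ) (i j : ℕ) :
    asmSum a i (j + 1) = asmSum a i j + ∑ k ∈ Icc 1 i, a k (j + 1) := by
  rw [asmSum, asmSum, ← sum_add_distrib]
  exact sum_congr rfl fun k _ => sum_Icc_succ_top (by omega) _

lemma asmSum_succ_succ (a : ℕ → ℕ → ℤ) (i j : ℕ) :
    asmSum a (i + 1) (j + 1) =
      asmSum a i (j + 1) + asmSum a (i + 1) j - asmSum a i j + a (i + 1) (j + 1) := by
  rw [asmSum_succ_left, asmSum_succ_left, sum_Icc_succ_top (by omega)]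
  ring

lemma heightToAsm_asmToHeight (a : ℕ → ℕ → ℤ) {i j : ℕ} (hi : 1 ≤ i) (hj : 1 ≤ j) :
    heightToAsm (asmToHeight a) i j = a i j := by
  obtain ⟨i, rfl⟩ := Nat.exists_eq_add_of_le' hi
  obtain ⟨j, rfl⟩ := Nat.exists_eq_add_of_le' hj
  have hmixed := asmSum_succ_succ a i j
  simp only [heightToAsm, asmToHeight, Nat.add_sub_cancel]
  push_cast
  omega

namespace IsASM

variable {n : ℕ} {a : ℕ → ℕ → ℤ}

lemma row_partial_sum (ha : IsASM n a) {i j : ℕ} (hi₁ : 1 ≤ i) (hi : i ≤ n) (hj : j ≤ n) :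
    ∑ l ∈ Icc 1 j, a i l = 0 ∨ ∑ l ∈ Icc 1 j, a i l = 1 := by
  rcases Nat.eq_zero_or_pos j with rfl | hj₁
  · simp
  · exact ha.2.2.2.1 i j hi₁ hi hj₁ hj

lemma col_partial_sum (ha : IsASM n a) {i j : ℕ} (hi : i ≤ n) (hj₁ : 1 ≤ j) (hj : j ≤ n) :
    ∑ k ∈ Icc 1 i, a k j = 0 ∨ ∑ k ∈ Icc 1 i, a k j = 1 := by
  rcases Nat.eq_zero_or_pos i with rfl | hi₁
  · simp
  · exact ha.2.2.2.2 i j hi₁ hi hj₁ hj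

lemma asmSum_right_eq (ha : IsASM n a) {i : ℕ} (hi : i ≤ n) : asmSum a i n = i := by
  induction i with
  | zero => simp [asmSum_zero_left]
  | succ i ih =>
    rw [asmSum_succ_left, ha.2.1 (i + 1) (by omega) hi, ih (by omega)]
    push_cast
    ring

lemma asmSum_left_eq (ha : IsASM n a) {j : ℕ} (hj : j ≤ n) : asmSum a n j = j := by
  rw [asmSum, sum_comm, sum_congr rfl fun l hl =>
    ha.2.2.1 l (mem_Icc.mp hl).1 ((mem_Icc.mp hl).2.trans hj)]
  simp

end IsASM

namespace IsHeight

variable {n : ℕ} {h : ℕ → ℕ → ℤ}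

lemma boundary (hh : IsHeight n h) {i : ℕ} (hi : i ≤ n) :
    h i 0 = i ∧ h 0 i = i ∧ h i n = n - i ∧ h n i = n - i := by
  obtain ⟨h₁, h₂, -, -⟩ := hh.2.2 i hi
  obtain ⟨-, -, h₃, h₄⟩ := hh.2.2 (n - i) (by omega)
  rw [Nat.sub_sub_self hi] at h₃ h₄
  refine ⟨h₁, h₂, ?_, ?_⟩ <;> omega

end IsHeight

/-- Unit vertical steps make the mixed second difference of `h` even, so the division by `2` in
`heightToAsm` is exact. -/
lemma two_mul_heightToAsm_succ_succ {h : ℕ → ℕ → ℤ} {i j : ℕ}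
    (hstep : |h (i + 1) j - h i j| = 1) (hstep' : |h (i + 1) (j + 1) - h i (j + 1)| = 1) :
    2 * heightToAsm h (i + 1) (j + 1) = h i (j + 1) + h (i + 1) j - h i j - h (i + 1) (j + 1) := by
  rw [abs_eq zero_le_one] at hstep hstep'
  simp only [heightToAsm, Nat.add_sub_cancel]
  omega

lemma IsHeight.two_mul_asmSum_heightToAsm {n : ℕ} {h : ℕ → ℕ → ℤ} (hh : IsHeight n h) :
    ∀ i ≤ n, ∀ j ≤ n, 2 * asmSum (heightToAsm h) i j = i + j - h i j := by
  intro i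
  induction i with
  | zero =>
    intro _ j hj
    simp [asmSum_zero_left, (hh.boundary hj).2.1]
  | succ i ih =>
    intro hi j
    induction j with
    | zero =>
      intro _
      simp [asmSum_zero_right, (hh.boundary hi).1]
    | succ j ihj =>
      intro hj
      have hmixed := two_mul_heightToAsm_succ_succ (hh.1 i j (by omega) (by omega))
        (hh.1 i (j + 1) (by omega) hj)
      have hleft := ihj (by omega)
      have hup := ih (by omega) (j + 1) hj
      have hdiag := ih (by omega) j (by omega)
      rw [asmSum_succ_succ]
      push_cast at hleft hup ⊢
      linarith

section Correspondence

variable {n : ℕ} {a h : ℕ → ℕ → ℤ}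

lemma two_mul_row_partial_sum (hah : ∀ i ≤ n, ∀ j ≤ n, h i j = i + j - 2 * asmSum a i j)
    {i j : ℕ} (hi : i < n) (hj : j ≤ n) :
    2 * ∑ l ∈ Icc 1 j, a (i + 1) l = 1 - (h (i + 1) j - h i j) := by
  rw [hah (i + 1) hi j hj, hah i hi.le j hj, asmSum_succ_left]
  push_cast
  ring

lemma two_mul_col_partial_sum (hah : ∀ i ≤ n, ∀ j ≤ n, h i j = i + j - 2 * asmSum a i j)
    {i j : ℕ} (hi : i ≤ n) (hj : j < n) :
    2 * ∑ k ∈ Icc 1 i, a k (j + 1) = 1 - (h i (j + 1) - h i j) := by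
  rw [hah i hi (j + 1) hj, hah i hi j hj.le, asmSum_succ_right]
  push_cast
  ring

lemma two_mul_entry (hah : ∀ i ≤ n, ∀ j ≤ n, h i j = i + j - 2 * asmSum a i j)
    {i j : ℕ} (hi : i < n) (hj : j < n) :
    2 * a (i + 1) (j + 1) = h i (j + 1) + h (i + 1) j - h i j - h (i + 1) (j + 1) := by
  rw [hah i hi.le j hj.le, hah (i + 1) hi j hj.le, hah i hi.le (j + 1) hj,
    hah (i + 1) hi (j + 1) hj, asmSum_succ_succ]
  push_cast
  ring

lemma isHeight_of_isASM (ha : IsASM n a)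
    (hah : ∀ i ≤ n, ∀ j ≤ n, h i j = i + j - 2 * asmSum a i j) : IsHeight n h := by
  refine ⟨fun i j hi hj => ?_, fun i j hi hj => ?_, fun i hi => ?_⟩
  · have hsum := two_mul_row_partial_sum hah hi hj
    rw [abs_eq zero_le_one]
    rcases ha.row_partial_sum (i := i + 1) (by omega) hi hj with hs | hs <;> omega
  · have hsum := two_mul_col_partial_sum hah hi hj
    rw [abs_eq zero_le_one]
    rcases ha.col_partial_sum (j := j + 1) hi (by omega) hj with hs | hs <;> omega
  · have hrow := ha.asmSum_right_eq (i := n - i) (by omega)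
    have hcol := ha.asmSum_left_eq (j := n - i) (by omega)
    rw [hah i hi 0 (by omega), hah 0 (by omega) i hi, hah (n - i) (by omega) n le_rfl,
      hah n le_rfl (n - i) (by omega), asmSum_zero_right, asmSum_zero_left]
    push_cast [Nat.cast_sub hi] at hrow hcol ⊢
    refine ⟨by ring, by ring, by linarith, by linarith⟩

lemma isASM_of_isHeight (hh : IsHeight n h)
    (hah : ∀ i ≤ n, ∀ j ≤ n, h i j = i + j - 2 * asmSum a i j) : IsASM n a := by
  refine ⟨fun i j hi₁ hi hj₁ hj => ?_, fun i hi₁ hi => ?_, fun j hj₁ hj => ?_,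
    fun i j hi₁ hi _ hj => ?_, fun i j _ hi hj₁ hj => ?_⟩
  · obtain ⟨i, rfl⟩ := Nat.exists_eq_add_of_le' hi₁
    obtain ⟨j, rfl⟩ := Nat.exists_eq_add_of_le' hj₁
    have hentry := two_mul_entry hah hi hj
    have hstep := hh.1 i j hi (by omega)
    have hstep' := hh.1 i (j + 1) hi hj
    rw [abs_eq zero_le_one] at hstep hstep'
    omega
  · obtain ⟨i, rfl⟩ := Nat.exists_eq_add_of_le' hi₁
    have hsum := two_mul_row_partial_sum hah hi le_rfl
    have hfar := (hh.boundary hi).2.2.1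
    have hfar' := (hh.boundary (i := i) (by omega)).2.2.1
    omega
  · obtain ⟨j, rfl⟩ := Nat.exists_eq_add_of_le' hj₁
    have hsum := two_mul_col_partial_sum hah le_rfl hj
    have hfar := (hh.boundary hj).2.2.2
    have hfar' := (hh.boundary (i := j) (by omega)).2.2.2
    omega
  · obtain ⟨i, rfl⟩ := Nat.exists_eq_add_of_le' hi₁
    have hsum := two_mul_row_partial_sum hah hi hj
    have hstep := hh.1 i j hi hj
    rw [abs_eq zero_le_one] at hstep
    omega
  · obtain ⟨j, rfl⟩ := Nat.exists_eq_add_of_le' hj₁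
    have hsum := two_mul_col_partial_sum hah hi hj
    have hstep := hh.2.1 i j hi hj
    rw [abs_eq zero_le_one] at hstep
    omega

end Correspondence

theorem asm_height_bijection (n : ℕ) :
    (∀ a : ℕ → ℕ → ℤ, IsASM n a →
      IsHeight n (asmToHeight a) ∧
        (∀ i j, 1 ≤ i → i ≤ n → 1 ≤ j → j ≤ n → heightToAsm (asmToHeight a) i j = a i j)) ∧
    (∀ h : ℕ → ℕ → ℤ, IsHeight n h →
      IsASM n (heightToAsm h) ∧
        (∀ i j, i ≤ n → j ≤ n → asmToHeight (heightToAsm h) i j = h i j)) := by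
  refine ⟨fun a ha => ⟨isHeight_of_isASM ha fun _ _ _ _ => rfl,
    fun i j hi _ hj _ => heightToAsm_asmToHeight a hi hj⟩, fun h hh => ?_⟩
  have hah : ∀ i ≤ n, ∀ j ≤ n, h i j = i + j - 2 * asmSum (heightToAsm h) i j :=
    fun i hi j hj => by linarith [hh.two_mul_asmSum_heightToAsm i hi j hj]
  exact ⟨isASM_of_isHeight hh hah, fun i j hi hj => (hah i hi j hj).symm⟩
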